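/- arXiv:1403.4983 — 4 statements merged into one kernel-verified Lean document; each statement's English description precedes it below -/
import Mathlib

section
/- Let (λ_j) be a sequence of positive reals and (c_j) a square-summable sequence of complex numbers. Let a, s > 0. If Σ_j |c_j|² ≤ a² Σ_j λ_j^{2s} |c_j|² (both sums assumed finite), then Σ_j |c_j|² ≤ a⁴ Σ_j λ_j^{4s} |c_j|², provided the latter sum is finite. -/
/-- Plancherel-side doubling step (Lemma 4.3, Pesenson): if
`Σ ‖c j‖² ≤ a² Σ λ_j^{2s} ‖c j‖²` then `Σ ‖c j‖² ≤ a⁴ Σ λ_j^{4s} ‖c j‖²`. -/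
theorem stmt_0 (lam : ℕ → ℝ) (c : ℕ → ℂ) (a s : ℝ)
    (hlam : ∀ j, 0 < lam j) (ha : 0 < a) (hs : 0 < s)
    (hc : Summable fun j => ‖c j‖ ^ 2)
    (h2s : Summable fun j => lam j ^ (2 * s) * ‖c j‖ ^ 2)
    (h4s : Summable fun j => lam j ^ (4 * s) * ‖c j‖ ^ 2)
    (hineq : (∑' j, ‖c j‖ ^ 2) ≤ a ^ 2 * ∑' j, lam j ^ (2 * s) * ‖c j‖ ^ 2) :
    (∑' j, ‖c j‖ ^ 2) ≤ a ^ 4 * ∑' j, lam j ^ (4 * s) * ‖c j‖ ^ 2 := by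
  set A := ∑' j, ‖c j‖ ^ 2 with hA
  set B := ∑' j, lam j ^ (4 * s) * ‖c j‖ ^ 2 with hB
  have hAnn : 0 ≤ A := tsum_nonneg fun j => sq_nonneg _
  have hBnn : 0 ≤ B := tsum_nonneg fun j => mul_nonneg (Real.rpow_nonneg (hlam j).le _) (sq_nonneg _)
  -- Cauchy–Schwarz: C ≤ sqrt (B * A)
  have hCS : (∑' j, lam j ^ (2 * s) * ‖c j‖ ^ 2) ≤ Real.sqrt (B * A) := by
    refine Summable.tsum_le_of_sum_le h2s fun t => ?_
    have key : (∑ j ∈ t, lam j ^ (2 * s) * ‖c j‖ ^ 2) ^ 2 ≤ B * A := by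
      have := Finset.sum_mul_sq_le_sq_mul_sq t (fun j => lam j ^ (2 * s) * ‖c j‖)
        (fun j => ‖c j‖)
      have e1 : ∀ j ∈ t, lam j ^ (2 * s) * ‖c j‖ * ‖c j‖ = lam j ^ (2 * s) * ‖c j‖ ^ 2 := by
        intro j _; ring
      have e2 : ∀ j ∈ t, (lam j ^ (2 * s) * ‖c j‖) ^ 2 = lam j ^ (4 * s) * ‖c j‖ ^ 2 := by
        intro j _
        rw [mul_pow, ← Real.rpow_natCast (lam j ^ (2 * s)) 2, ← Real.rpow_mul (hlam j).le]
        congr 1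
        rw [show 2 * s * ((2 : ℕ) : ℝ) = 4 * s by push_cast; ring]
      rw [Finset.sum_congr rfl e1, Finset.sum_congr rfl e2] at this
      refine this.trans (mul_le_mul ?_ ?_ ?_ hBnn)
      · exact Summable.sum_le_tsum t (fun j _ => mul_nonneg (Real.rpow_nonneg (hlam j).le _) (sq_nonneg _)) h4s
      · exact Summable.sum_le_tsum t (fun j _ => sq_nonneg _) hc
      · exact Finset.sum_nonneg fun j _ => sq_nonneg _
    have hnn : 0 ≤ ∑ j ∈ t, lam j ^ (2 * s) * ‖c j‖ ^ 2 :=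
      Finset.sum_nonneg fun j _ => mul_nonneg (Real.rpow_nonneg (hlam j).le _) (sq_nonneg _)
    calc ∑ j ∈ t, lam j ^ (2 * s) * ‖c j‖ ^ 2
        = Real.sqrt ((∑ j ∈ t, lam j ^ (2 * s) * ‖c j‖ ^ 2) ^ 2) := (Real.sqrt_sq hnn).symm
      _ ≤ Real.sqrt (B * A) := Real.sqrt_le_sqrt key
  have hmain : A ≤ a ^ 2 * Real.sqrt (B * A) :=
    hineq.trans (by nlinarith [sq_nonneg a])
  rcases eq_or_lt_of_le hAnn with h0 | h0
  · rw [← h0]; positivity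
  · -- A > 0 : square both sides
    have hsq : A ^ 2 ≤ (a ^ 2) ^ 2 * (B * A) := by
      have h1 : A ^ 2 ≤ (a ^ 2 * Real.sqrt (B * A)) ^ 2 := by
        apply pow_le_pow_left₀ hAnn hmain
      have h2 : Real.sqrt (B * A) ^ 2 = B * A := Real.sq_sqrt (mul_nonneg hBnn hAnn)
      calc A ^ 2 ≤ (a ^ 2 * Real.sqrt (B * A)) ^ 2 := h1
        _ = (a ^ 2) ^ 2 * (B * A) := by rw [mul_pow, h2]
    nlinarith
end

section
/- Let (λ_j) be a sequence of positive reals and (c_j) a sequence of complex numbers, and let a, s > 0. Suppose Σ_j |c_j|² ≤ a² Σ_j λ_j^{2s}|c_j|² with all relevant sums finite. Then for every t ≥ 0 and every m of the form m = 2^l (l a natural number), Σ_j λ_j^{2t}|c_j|² ≤ a^{2m} Σ_j λ_j^{2(ms+t)}|c_j|², whenever the right-hand side is finite. -/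
private lemma sumLower {lam : ℕ → ℝ} {w : ℕ → ℝ} (hlam : ∀ j, 0 < lam j)
    (hw : ∀ j, 0 ≤ w j) (hc : Summable w) {α β : ℝ} (hα : 0 ≤ α) (hαβ : α ≤ β)
    (hβ : Summable fun j => lam j ^ β * w j) :
    Summable fun j => lam j ^ α * w j := by
  refine Summable.of_nonneg_of_le
    (fun j => mul_nonneg (Real.rpow_nonneg (hlam j).le _) (hw j))
    (fun j => ?_) (hc.add hβ)
  rcases le_or_gt (lam j) 1 with h1 | h1
  · have h2 := Real.rpow_le_one (hlam j).le h1 hα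
    nlinarith [hw j, Real.rpow_nonneg (hlam j).le β]
  · have h2 := Real.rpow_le_rpow_of_exponent_le h1.le hαβ
    nlinarith [hw j]

private lemma keyStep {lam : ℕ → ℝ} {w : ℕ → ℝ} {a s : ℝ}
    (hlam : ∀ j, 0 < lam j) (hw : ∀ j, 0 ≤ w j) (ha : 0 < a) (hs : 0 < s)
    (hc : Summable w) (h2s : Summable fun j => lam j ^ (2 * s) * w j)
    (hineq : (∑' j, w j) ≤ a ^ 2 * ∑' j, lam j ^ (2 * s) * w j)
    {u : ℝ} (hu : 0 ≤ u) (hsum : Summable fun j => lam j ^ (2 * (s + u)) * w j) :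
    (∑' j, lam j ^ (2 * u) * w j) ≤ a ^ 2 * ∑' j, lam j ^ (2 * (s + u)) * w j := by
  set A : ℝ := a ^ (-(1/s)) with hA
  have hApos : 0 < A := Real.rpow_pos_of_pos ha _
  have ha2 : (0:ℝ) < a ^ 2 := by positivity
  have hmulinv : a ^ 2 * (a ^ 2)⁻¹ = 1 := mul_inv_cancel₀ (ne_of_gt ha2)
  have hA2s : A ^ (2 * s) = (a ^ 2)⁻¹ := by
    rw [hA, ← Real.rpow_mul ha.le]
    have hex : -(1/s) * (2 * s) = -2 := by field_simp
    rw [hex, show (-2:ℝ) = -((2:ℕ):ℝ) by norm_num, Real.rpow_neg ha.le,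
      Real.rpow_natCast]
  have hsplit : ∀ j, lam j ^ (2 * (s + u)) = lam j ^ (2 * s) * lam j ^ (2 * u) := by
    intro j
    rw [show 2 * (s + u) = 2 * s + 2 * u by ring, Real.rpow_add (hlam j)]
  have h2u : Summable fun j => lam j ^ (2 * u) * w j :=
    sumLower hlam hw hc (by positivity) (by nlinarith) hsum
  have hkey : ∀ j, A ^ (2 * u) * (a ^ 2 * (lam j ^ (2 * s) * w j) - w j)
      ≤ a ^ 2 * (lam j ^ (2 * (s + u)) * w j) - lam j ^ (2 * u) * w j := by
    intro j
    rw [hsplit j]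
    have hfac : 0 ≤ (a ^ 2 * lam j ^ (2 * s) - 1) * (lam j ^ (2 * u) - A ^ (2 * u)) := by
      rcases le_or_gt A (lam j) with h | h
      · have h1 : A ^ (2 * s) ≤ lam j ^ (2 * s) :=
          Real.rpow_le_rpow hApos.le h (by positivity)
        have h2 : A ^ (2 * u) ≤ lam j ^ (2 * u) :=
          Real.rpow_le_rpow hApos.le h (by positivity)
        rw [hA2s] at h1
        have hge1 : (1:ℝ) ≤ a ^ 2 * lam j ^ (2 * s) := by nlinarith
        nlinarith
      · have h1 : lam j ^ (2 * s) ≤ A ^ (2 * s) :=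
          Real.rpow_le_rpow (hlam j).le h.le (by positivity)
        have h2 : lam j ^ (2 * u) ≤ A ^ (2 * u) :=
          Real.rpow_le_rpow (hlam j).le h.le (by positivity)
        rw [hA2s] at h1
        have hle1 : a ^ 2 * lam j ^ (2 * s) ≤ 1 := by nlinarith
        nlinarith
    nlinarith [mul_nonneg hfac (hw j)]
  have hd : Summable fun j => a ^ 2 * (lam j ^ (2 * (s + u)) * w j) - lam j ^ (2 * u) * w j :=
    (hsum.mul_left _).sub h2u
  have he : Summable fun j => A ^ (2 * u) * (a ^ 2 * (lam j ^ (2 * s) * w j) - w j) :=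
    ((h2s.mul_left _).sub hc).mul_left _
  have h1 := Summable.tsum_le_tsum hkey he hd
  have hL : (∑' j, A ^ (2 * u) * (a ^ 2 * (lam j ^ (2 * s) * w j) - w j))
      = A ^ (2 * u) * (a ^ 2 * (∑' j, lam j ^ (2 * s) * w j) - ∑' j, w j) := by
    rw [tsum_mul_left, Summable.tsum_sub (h2s.mul_left _) hc, tsum_mul_left]
  have hR : (∑' j, (a ^ 2 * (lam j ^ (2 * (s + u)) * w j) - lam j ^ (2 * u) * w j))
      = a ^ 2 * (∑' j, lam j ^ (2 * (s + u)) * w j) - ∑' j, lam j ^ (2 * u) * w j := by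
    rw [Summable.tsum_sub (hsum.mul_left _) h2u, tsum_mul_left]
  rw [hL, hR] at h1
  have he0 : 0 ≤ A ^ (2 * u) * (a ^ 2 * (∑' j, lam j ^ (2 * s) * w j) - ∑' j, w j) :=
    mul_nonneg (Real.rpow_nonneg hApos.le _) (by linarith)
  linarith

private lemma mainAux {lam : ℕ → ℝ} {w : ℕ → ℝ} {a s : ℝ}
    (hlam : ∀ j, 0 < lam j) (hw : ∀ j, 0 ≤ w j) (ha : 0 < a) (hs : 0 < s)
    (hc : Summable w) (h2s : Summable fun j => lam j ^ (2 * s) * w j)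
    (hineq : (∑' j, w j) ≤ a ^ 2 * ∑' j, lam j ^ (2 * s) * w j) :
    ∀ (l : ℕ) (t : ℝ), 0 ≤ t →
      (Summable fun j => lam j ^ (2 * ((2:ℝ) ^ l * s + t)) * w j) →
      (∑' j, lam j ^ (2 * t) * w j) ≤
        a ^ (2 * 2 ^ l) * ∑' j, lam j ^ (2 * ((2:ℝ) ^ l * s + t)) * w j := by
  intro l
  induction l with
  | zero =>
    intro t ht hsum
    have h0 : (2:ℝ) ^ (0:ℕ) * s + t = s + t := by norm_num
    rw [h0] at hsum ⊢
    have := keyStep hlam hw ha hs hc h2s hineq ht hsum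
    simpa using this
  | succ l ih =>
    intro t ht hsum
    have hm : (0:ℝ) < (2:ℝ) ^ l := by positivity
    have hexp : 2 * ((2:ℝ) ^ (l+1) * s + t) = 2 * ((2:ℝ) ^ l * s + ((2:ℝ) ^ l * s + t)) := by
      ring
    have hsum' : Summable fun j =>
        lam j ^ (2 * ((2:ℝ) ^ l * s + ((2:ℝ) ^ l * s + t))) * w j := by
      rw [← hexp]; exact hsum
    have hmid : Summable fun j => lam j ^ (2 * ((2:ℝ) ^ l * s + t)) * w j :=
      sumLower hlam hw hc (by positivity) (by nlinarith) hsum'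
    have h1 := ih t ht hmid
    have h2 := ih ((2:ℝ) ^ l * s + t) (by positivity) hsum'
    calc (∑' j, lam j ^ (2 * t) * w j)
        ≤ a ^ (2 * 2 ^ l) * ∑' j, lam j ^ (2 * ((2:ℝ) ^ l * s + t)) * w j := h1
      _ ≤ a ^ (2 * 2 ^ l) * (a ^ (2 * 2 ^ l) *
            ∑' j, lam j ^ (2 * ((2:ℝ) ^ l * s + ((2:ℝ) ^ l * s + t))) * w j) :=
          mul_le_mul_of_nonneg_left h2 (by positivity)
      _ = a ^ (2 * 2 ^ (l+1)) * ∑' j, lam j ^ (2 * ((2:ℝ) ^ (l+1) * s + t)) * w j := by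
          rw [show 2 * 2 ^ (l+1) = 2 * 2 ^ l + 2 * 2 ^ l by ring, pow_add, mul_assoc, hexp]

/-- Abstract (sequence) version of Lemma 4.3 (Pesenson): from
`Σ ‖c j‖² ≤ a² Σ λ_j^{2s}‖c j‖²` deduce, for `t ≥ 0` and `m = 2^l`,
`Σ λ_j^{2t}‖c j‖² ≤ a^{2m} Σ λ_j^{2(ms+t)}‖c j‖²`. -/
theorem stmt_1 (lam : ℕ → ℝ) (c : ℕ → ℂ) (a s : ℝ)
    (hlam : ∀ j, 0 < lam j) (ha : 0 < a) (hs : 0 < s)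
    (hc : Summable fun j => ‖c j‖ ^ 2)
    (h2s : Summable fun j => lam j ^ (2 * s) * ‖c j‖ ^ 2)
    (hineq : (∑' j, ‖c j‖ ^ 2) ≤ a ^ 2 * ∑' j, lam j ^ (2 * s) * ‖c j‖ ^ 2)
    (t : ℝ) (ht : 0 ≤ t) (l : ℕ)
    (hrhs : Summable fun j =>
      lam j ^ (2 * (((2 ^ l : ℕ) : ℝ) * s + t)) * ‖c j‖ ^ 2) :
    (∑' j, lam j ^ (2 * t) * ‖c j‖ ^ 2) ≤
      a ^ (2 * 2 ^ l) * ∑' j, lam j ^ (2 * (((2 ^ l : ℕ) : ℝ) * s + t)) * ‖c j‖ ^ 2 := by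
  have hcast : ((2 ^ l : ℕ) : ℝ) = (2:ℝ) ^ l := by push_cast; ring
  rw [hcast] at hrhs ⊢
  exact mainAux hlam (fun j => by positivity) ha hs hc h2s hineq l t ht hrhs
end

section
/- Let Δ be a self-adjoint nonnegative operator on a Hilbert space, a, s > 0, and f in the domain of Δ^{2s}. If ‖f‖ ≤ a‖Δ^s f‖, then ‖f‖ ≤ a²‖Δ^{2s} f‖. -/
open scoped ComplexConjugate

/-- Base doubling step of Lemma 4.3 (Pesenson), operator form via an
orthonormal eigenbasis: `Δ^s f` and `Δ^{2s} f` are represented by the vectors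
`fs`, `f2s` whose coefficients are `λ_j^s`, `λ_j^{2s}` times those of `f`.
If `‖f‖ ≤ a ‖Δ^s f‖` then `‖f‖ ≤ a² ‖Δ^{2s} f‖`. -/
theorem stmt_2 {H : Type*} [NormedAddCommGroup H] [InnerProductSpace ℂ H]
    [CompleteSpace H] {ι : Type*} (B : HilbertBasis ι ℂ H)
    (lam : ι → ℝ) (hlam : ∀ j, 0 < lam j)
    (a s : ℝ) (ha : 0 < a) (hs : 0 < s) (f fs f2s : H)
    (hfs : ∀ j, B.repr fs j = ((lam j ^ s : ℝ) : ℂ) * B.repr f j)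
    (hf2s : ∀ j, B.repr f2s j = ((lam j ^ (2 * s) : ℝ) : ℂ) * B.repr f j)
    (h : ‖f‖ ≤ a * ‖fs‖) :
    ‖f‖ ≤ a ^ 2 * ‖f2s‖ := by
  have key : (inner ℂ fs fs : ℂ) = inner ℂ f f2s := by
    rw [← B.repr.inner_map_map fs fs, ← B.repr.inner_map_map f f2s,
      lp.inner_eq_tsum, lp.inner_eq_tsum]
    congr 1
    ext j
    have h2 : ((lam j ^ (2 * s) : ℝ) : ℂ) =
        ((lam j ^ s : ℝ) : ℂ) * ((lam j ^ s : ℝ) : ℂ) := by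
      rw [← Complex.ofReal_mul, ← Real.rpow_add (hlam j)]
      ring_nf
    simp only [RCLike.inner_apply, hfs, hf2s, h2, map_mul, Complex.conj_ofReal]
    ring
  have hns : ‖fs‖ ^ 2 ≤ ‖f‖ * ‖f2s‖ := by
    have := norm_inner_le_norm (𝕜 := ℂ) f f2s
    calc ‖fs‖ ^ 2 = Complex.re (inner ℂ fs fs) := by
          rw [← inner_self_eq_norm_sq (𝕜 := ℂ)]; rfl
      _ = Complex.re (inner ℂ f f2s : ℂ) := by rw [key]
      _ ≤ ‖(inner ℂ f f2s : ℂ)‖ := Complex.re_le_norm _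
      _ ≤ ‖f‖ * ‖f2s‖ := this
  have hf2 : ‖f‖ ^ 2 ≤ a ^ 2 * (‖f‖ * ‖f2s‖) := by
    calc ‖f‖ ^ 2 ≤ (a * ‖fs‖) ^ 2 := by
          apply pow_le_pow_left₀ (norm_nonneg f) h
      _ = a ^ 2 * ‖fs‖ ^ 2 := by ring
      _ ≤ a ^ 2 * (‖f‖ * ‖f2s‖) := by
          exact mul_le_mul_of_nonneg_left hns (by positivity)
  rcases eq_or_lt_of_le (norm_nonneg f) with h0 | h0
  · rw [← h0]; positivity
  · have := hf2
    rw [pow_two] at this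
    nlinarith
end

section
/- Let A be a self-adjoint nonnegative operator on a Hilbert space H, let E be a finite-dimensional A-invariant subspace contained in the domain of A, and suppose sup_{0≠ψ∈E} ‖A^{1/2}ψ‖²/‖ψ‖² ≤ λ. Let ψ ∈ E, let h be in the domain of A^{1/2}, write h = h_E + h^⊥ with h_E ∈ E and h^⊥ ∈ E^⊥, and set v = ψ + h. If v ≠ 0 and ψ + h_E ≠ 0, then ‖A^{1/2}v‖²/‖v‖² ≤ λ + ‖A^{1/2}h^⊥‖²/‖v‖². -/
open scoped InnerProductSpace

/-- Abstract form of inequality (2.3) in Pesenson's proof of Theorem 1.3.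
`S` plays the role of `A^{1/2}` (so `A = S ∘ S`), `E` is a finite-dimensional
`A`-invariant subspace (hence `S`-invariant), with Rayleigh bound `λ` on `E`.
For `h = h_E + h^⊥` and `v = ψ + h`:
`‖A^{1/2}v‖²/‖v‖² ≤ λ + ‖A^{1/2}h^⊥‖²/‖v‖²`. -/
theorem stmt_6 {H : Type*} [NormedAddCommGroup H] [InnerProductSpace ℂ H]
    (S : H →ₗ[ℂ] H) (hS : ∀ x y : H, ⟪S x, y⟫_ℂ = ⟪x, S y⟫_ℂ)
    (E : Submodule ℂ H) [FiniteDimensional ℂ E]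
    (hSE : ∀ x ∈ E, S x ∈ E)
    (lam : ℝ) (hbound : ∀ ψ ∈ E, ψ ≠ 0 → ‖S ψ‖ ^ 2 / ‖ψ‖ ^ 2 ≤ lam)
    (ψ hE hperp h v : H) (hψ : ψ ∈ E) (hhE : hE ∈ E) (hhp : hperp ∈ Eᗮ)
    (hh : h = hE + hperp) (hv : v = ψ + h)
    (hv0 : v ≠ 0) (hne : ψ + hE ≠ 0) :
    ‖S v‖ ^ 2 / ‖v‖ ^ 2 ≤ lam + ‖S hperp‖ ^ 2 / ‖v‖ ^ 2 := by
  set u := ψ + hE with hu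
  have huE : u ∈ E := E.add_mem hψ hhE
  have hvu : v = u + hperp := by rw [hv, hh, hu]; abel
  -- cross terms vanish
  have horth1 : ⟪u, hperp⟫_ℂ = 0 := hhp u huE
  have horth2 : ⟪S u, S hperp⟫_ℂ = 0 := by
    rw [← hS]; exact hhp (S (S u)) (hSE _ (hSE _ huE))
  have hnv : ‖v‖ ^ 2 = ‖u‖ ^ 2 + ‖hperp‖ ^ 2 := by
    rw [hvu]; simpa [sq] using norm_add_sq_eq_norm_sq_add_norm_sq_of_inner_eq_zero _ _ horth1
  have hnSv : ‖S v‖ ^ 2 = ‖S u‖ ^ 2 + ‖S hperp‖ ^ 2 := by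
    rw [hvu, map_add]
    simpa [sq] using norm_add_sq_eq_norm_sq_add_norm_sq_of_inner_eq_zero _ _ horth2
  have hu0 : (0:ℝ) < ‖u‖ ^ 2 := by have := norm_pos_iff.mpr hne; positivity
  have hv02 : (0:ℝ) < ‖v‖ ^ 2 := by have := norm_pos_iff.mpr hv0; positivity
  have huv : ‖u‖ ^ 2 ≤ ‖v‖ ^ 2 := by nlinarith [sq_nonneg ‖hperp‖]
  have h1 : ‖S u‖ ^ 2 / ‖v‖ ^ 2 ≤ ‖S u‖ ^ 2 / ‖u‖ ^ 2 :=
    div_le_div_of_nonneg_left (by positivity) hu0 huv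
  have h2 : ‖S u‖ ^ 2 / ‖u‖ ^ 2 ≤ lam := hbound u huE hne
  calc ‖S v‖ ^ 2 / ‖v‖ ^ 2 = ‖S u‖ ^ 2 / ‖v‖ ^ 2 + ‖S hperp‖ ^ 2 / ‖v‖ ^ 2 := by
        rw [hnSv, add_div]
    _ ≤ lam + ‖S hperp‖ ^ 2 / ‖v‖ ^ 2 := by linarith
end
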